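/- There is a constant d (depending only on the universal machine) such that for all binary strings x and y: C(xy | n_x, n_y) ≤ C(y | n_y) + C(x | y, n_x) + 2·C⁽²⁾(y | n_y) + d, where xy denotes the concatenation of x and y. (Easy direction of the chain rule.) -/

import Mathlib

/-!
Concatenate a unary-length-prefixed shortest program `q` for `bin C(y | n_y)` given `n_y`, a
shortest program `p₁` for `y` given `n_y`, and a shortest program `p₂` for `x` given `(y, n_x)`.
The prefix makes `q` self-delimiting at the price of doubling its length, and `q` in turn tells
where `p₁` ends, so one partial computable decoder recovers `x ++ y` from the concatenation and
the condition `(n_x, n_y)`; universality of `U` then costs only an additive constant.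
-/

namespace SymInfo

/-- A conditional machine: the input encodes the pair (program, conditional information). -/
abbrev Machine : Type := ℕ →. ℕ

/-- Machine `M` produces string `x` from some program, given condition `cond`. -/
def Produces (M : Machine) (x cond : List Bool) : Prop :=
  ∃ p : List Bool, Encodable.encode x ∈ M (Nat.pair (Encodable.encode p) (Encodable.encode cond))

/-- Conditional plain Kolmogorov complexity of `x` given `cond` w.r.t. `M`:
the length of a shortest program producing `x` from `cond`. -/
noncomputable def C (M : Machine) (x cond : List Bool) : ℕ :=
  sInf {n | ∃ p : List Bool, p.length = n ∧
    Encodable.encode x ∈ M (Nat.pair (Encodable.encode p) (Encodable.encode cond))}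

/-- Binary representation of a natural number. -/
def bin (n : ℕ) : List Bool := n.bits

/-- Standard pairing of two strings, used for conditioning on several objects. -/
def pair2 (a b : List Bool) : List Bool :=
  bin (Nat.pair (Encodable.encode a) (Encodable.encode b))

/-- `U` is a universal machine for plain conditional complexity: it is partial computable,
produces every string under every condition, and simulates every partial computable
machine up to an additive constant. -/
def IsUniversal (U : Machine) : Prop :=
  Nat.Partrec U ∧ (∀ x cond : List Bool, Produces U x cond) ∧
    ∀ M : Machine, Nat.Partrec M → ∃ c : ℕ, ∀ x cond : List Bool,
      Produces M x cond → C U x cond ≤ C M x cond + c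

/-- `C(x | n_x)`: complexity of `x` given (the binary representation of) its length. -/
noncomputable def CL (U : Machine) (x : List Bool) : ℕ := C U x (bin x.length)

/-- `C⁽²⁾(x | n_x) = C(C(x | n_x) | n_x)`. -/
noncomputable def C2 (U : Machine) (x : List Bool) : ℕ := C U (bin (CL U x)) (bin x.length)

/-- `I(x : y) = C(y | n_y) − C(y | x, n_y)`: the information in `x` about `y`. -/
noncomputable def I (U : Machine) (x y : List Bool) : ℤ :=
  (C U y (bin y.length) : ℤ) - (C U y (pair2 x (bin y.length)) : ℤ)

/-- Base-2 logarithm with the convention `log 0 = 0` (and `log 1 = 0`). -/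
def log2 (n : ℕ) : ℕ := Nat.log 2 n

open Encodable

lemma bits_eq_cons_of_ne_zero {n : ℕ} (hn : n ≠ 0) : n.bits = n.bodd :: n.div2.bits := by
  have hbit := Nat.bits_append_bit n.div2 n.bodd fun h => by
    have := Nat.bodd_add_div2 n
    cases hb : n.bodd <;> simp_all
  rwa [Nat.bit_bodd_div2] at hbit

lemma primrec_bits : Primrec Nat.bits :=
  Primrec.nat_omega_rec' Nat.bits (m := id) (l := fun n => if n = 0 then [] else [n.div2])
    (g := fun n L => if n = 0 then some [] else L.head?.map (n.bodd :: ·))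
    Primrec.id
    (Primrec.ite (Primrec.eq.comp .id (.const 0)) (.const [])
      (Primrec.list_cons.comp Primrec.nat_div2 (.const [])))
    (Primrec.ite (Primrec.eq.comp .fst (.const 0)) (.const (some []))
      (Primrec.option_map (Primrec.list_head?.comp .snd)
        (Primrec.list_cons.comp (Primrec.nat_bodd.comp (Primrec.fst.comp .fst)) .snd).to₂)).to₂
    (fun n n' hn' => by
      split_ifs at hn' with hn
      · simp at hn'
      · simpa [List.mem_singleton.mp hn'] using Nat.binaryRec_decreasing hn)
    (fun n => by
      by_cases hn : n = 0
      · simp [hn]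
      · simp [hn, bits_eq_cons_of_ne_zero hn])

def ofBits (l : List Bool) : ℕ := Nat.ofDigits 2 (l.map fun b => cond b 1 0)

lemma ofBits_bits (n : ℕ) : ofBits n.bits = n := by
  rw [ofBits, ← Nat.digits_two_eq_bits, Nat.ofDigits_digits]

lemma primrec_ofBits : Primrec ofBits :=
  (Primrec.list_foldr (h := fun _ p => cond p.1 1 0 + 2 * p.2) .id (.const 0)
    (Primrec.nat_add.comp (Primrec.cond (Primrec.fst.comp .snd) (.const 1) (.const 0))
      (Primrec.nat_mul.comp (.const 2) (Primrec.snd.comp .snd))).to₂).of_eq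
    fun l => by simp [ofBits, Nat.ofDigits_eq_foldr, List.foldr_map]

lemma primrec₂_pair2 : Primrec₂ pair2 :=
  primrec_bits.comp (Primrec₂.natPair.comp (Primrec.encode.comp .fst) (Primrec.encode.comp .snd))

def selfDelim (q : List Bool) : List Bool := List.replicate q.length true ++ false :: q

lemma length_selfDelim (q : List Bool) : (selfDelim q).length = 2 * q.length + 1 := by
  simp only [selfDelim, List.length_append, List.length_replicate, List.length_cons]
  omega

def splitSelfDelim (P : List Bool) : List Bool × List Bool :=
  ((P.drop (P.idxOf false + 1)).take (P.idxOf false), P.drop (2 * P.idxOf false + 1))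

lemma splitSelfDelim_selfDelim_append (q r : List Bool) :
    splitSelfDelim (selfDelim q ++ r) = (q, r) := by
  have hidx : (selfDelim q ++ r).idxOf false = q.length := by
    simp [selfDelim, List.idxOf_append_of_notMem]
  rw [splitSelfDelim, hidx]
  have hdrop (k : ℕ) : (selfDelim q ++ r).drop (q.length + 1 + k) = (q ++ r).drop k := by
    simp [selfDelim, List.drop_append, Nat.add_assoc, Nat.add_comm 1 k]
  rw [← Nat.add_zero (q.length + 1), hdrop,
    show 2 * q.length + 1 = q.length + 1 + q.length by omega, hdrop]
  simp

lemma primrec_splitSelfDelim : Primrec splitSelfDelim := by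
  have hk : Primrec fun P : List Bool => P.idxOf false := Primrec.list_idxOf.comp (.const false) .id
  exact Primrec.pair (Primrec.list_take.comp hk (Primrec.list_drop.comp (Primrec.succ.comp hk) .id))
    (Primrec.list_drop.comp (Primrec.succ.comp (Primrec.nat_mul.comp (.const 2) hk)) .id)

def run (M : Machine) (p cond : List Bool) : Part (List Bool) :=
  (M (Nat.pair (encode p) (encode cond))).bind fun n => (decode n : Option (List Bool))

lemma mem_run {M : Machine} {x p cond : List Bool}
    (h : encode x ∈ M (Nat.pair (encode p) (encode cond))) : x ∈ run M p cond :=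
  Part.mem_bind_iff.2 ⟨encode x, h, by simp [encodek]⟩

lemma partrec₂_run {M : Machine} (hM : Nat.Partrec M) : Partrec₂ (run M) :=
  Partrec.bind ((Partrec.nat_iff.2 hM).comp
      (Primrec₂.natPair.comp (Primrec.encode.comp .fst) (Primrec.encode.comp .snd)).to_comp)
    (Computable.ofOption (Computable.decode.comp .snd)).to₂

def Machine.ofPartFun (f : List Bool → List Bool → Part (List Bool)) : Machine := fun n =>
  (f ((decode n.unpair.1).getD []) ((decode n.unpair.2).getD [])).map encode

lemma Machine.partrec_ofPartFun {f : List Bool → List Bool → Part (List Bool)}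
    (hf : Partrec₂ f) : Nat.Partrec (Machine.ofPartFun f) := by
  have hdecode {g : ℕ → ℕ} (hg : Primrec g) :
      Computable fun n => ((decode (g n) : Option (List Bool)).getD []) :=
    (Primrec.option_getD.comp (Primrec.decode.comp hg) (.const [])).to_comp
  exact Partrec.nat_iff.1 <| Partrec.map
    (hf.comp (hdecode (Primrec.fst.comp .unpair)) (hdecode (Primrec.snd.comp .unpair)))
    (Computable.encode.comp .snd).to₂

lemma Machine.encode_mem_ofPartFun {f : List Bool → List Bool → Part (List Bool)}
    {x p cond : List Bool} (h : x ∈ f p cond) :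
    encode x ∈ Machine.ofPartFun f (Nat.pair (encode p) (encode cond)) := by
  simpa [Machine.ofPartFun, encodek] using Part.mem_map encode h

lemma C_le_length {M : Machine} {x p cond : List Bool}
    (h : encode x ∈ M (Nat.pair (encode p) (encode cond))) : C M x cond ≤ p.length :=
  Nat.sInf_le ⟨p, rfl, h⟩

namespace IsUniversal

variable {U : Machine}

lemma exists_run_length_eq_C (hU : IsUniversal U) (x cond : List Bool) :
    ∃ p : List Bool, p.length = C U x cond ∧ x ∈ run U p cond := by
  obtain ⟨p, hp⟩ := hU.2.1 x cond
  obtain ⟨q, hq_len, hq⟩ := Nat.sInf_mem (⟨p.length, p, rfl, hp⟩ : {n | ∃ p : List Bool,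
    p.length = n ∧ encode x ∈ U (Nat.pair (encode p) (encode cond))}.Nonempty)
  exact ⟨q, hq_len, mem_run hq⟩

lemma exists_C_le_length_add (hU : IsUniversal U)
    {f : List Bool → List Bool → Part (List Bool)} (hf : Partrec₂ f) :
    ∃ c : ℕ, ∀ x p cond : List Bool, x ∈ f p cond → C U x cond ≤ p.length + c := by
  obtain ⟨c, hc⟩ := hU.2.2 _ (Machine.partrec_ofPartFun hf)
  refine ⟨c, fun x p cond hx => ?_⟩
  have hM := Machine.encode_mem_ofPartFun hx
  exact (hc x cond ⟨p, hM⟩).trans (Nat.add_le_add_right (C_le_length hM) c)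

end IsUniversal

def unpairCond (cond : List Bool) : List Bool × List Bool :=
  ((decode (ofBits cond).unpair.1).getD [], (decode (ofBits cond).unpair.2).getD [])

lemma unpairCond_pair2 (a b : List Bool) : unpairCond (pair2 a b) = (a, b) := by
  simp [unpairCond, pair2, bin, ofBits_bits, encodek]

lemma primrec_unpairCond : Primrec unpairCond := by
  have hdecode {g : ℕ → ℕ} (hg : Primrec g) :
      Primrec fun cond => ((decode (g (ofBits cond)) : Option (List Bool)).getD []) :=
    Primrec.option_getD.comp (Primrec.decode.comp (hg.comp primrec_ofBits)) (.const [])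
  exact Primrec.pair (hdecode (Primrec.fst.comp .unpair)) (hdecode (Primrec.snd.comp .unpair))

def chainRun (U : Machine) (P cond : List Bool) : Part (List Bool) :=
  (run U (splitSelfDelim P).1 (unpairCond cond).2).bind fun s =>
    (run U ((splitSelfDelim P).2.take (ofBits s)) (unpairCond cond).2).bind fun y =>
      (run U ((splitSelfDelim P).2.drop (ofBits s)) (pair2 y (unpairCond cond).1)).map (· ++ y)

lemma append_mem_chainRun {U : Machine} {ℓ : ℕ} {q p₁ p₂ x y a b : List Bool}
    (hq : bin ℓ ∈ run U q b) (hp₁ : y ∈ run U p₁ b) (hp₁_len : p₁.length = ℓ)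
    (hp₂ : x ∈ run U p₂ (pair2 y a)) :
    x ++ y ∈ chainRun U (selfDelim q ++ (p₁ ++ p₂)) (pair2 a b) := by
  simp only [chainRun, splitSelfDelim_selfDelim_append, unpairCond_pair2]
  refine Part.mem_bind_iff.2 ⟨_, hq, Part.mem_bind_iff.2 ⟨y, ?_, Part.mem_map (· ++ y) ?_⟩⟩
  · simpa [bin, ofBits_bits, ← hp₁_len] using hp₁
  · simpa [bin, ofBits_bits, ← hp₁_len] using hp₂

lemma partrec₂_chainRun {U : Machine} (hU : Nat.Partrec U) : Partrec₂ (chainRun U) := by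
  have hsplit := primrec_splitSelfDelim
  have hcond := primrec_unpairCond
  have hrun := partrec₂_run hU
  refine Partrec.bind (hrun.comp (Primrec.fst.comp (hsplit.comp .fst)).to_comp
    (Primrec.snd.comp (hcond.comp .snd)).to_comp) (Partrec.bind ?_ (Partrec.map ?_ ?_))
  · exact hrun.comp (Primrec.list_take.comp (primrec_ofBits.comp .snd)
      (Primrec.snd.comp (hsplit.comp (Primrec.fst.comp .fst)))).to_comp
      (Primrec.snd.comp (hcond.comp (Primrec.snd.comp .fst))).to_comp
  · exact hrun.comp (Primrec.list_drop.comp (primrec_ofBits.comp (Primrec.snd.comp .fst))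
      (Primrec.snd.comp (hsplit.comp (Primrec.fst.comp (Primrec.fst.comp .fst))))).to_comp
      (primrec₂_pair2.comp .snd
        (Primrec.fst.comp (hcond.comp (Primrec.snd.comp (Primrec.fst.comp .fst))))).to_comp
  · exact (Primrec.list_append.comp .snd (Primrec.snd.comp .fst)).to_comp.to₂

/-- Easy direction of the chain rule:
`C(xy | n_x, n_y) ≤ C(y | n_y) + C(x | y, n_x) + 2·C⁽²⁾(y | n_y) + O(1)`. -/
theorem chain_rule_upper_bound (U : Machine) (hU : IsUniversal U) :
    ∃ d : ℕ, ∀ x y : List Bool,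
      C U (x ++ y) (pair2 (bin x.length) (bin y.length)) ≤
        C U y (bin y.length) + C U x (pair2 y (bin x.length)) + 2 * C2 U y + d := by
  obtain ⟨c, hc⟩ := hU.exists_C_le_length_add (partrec₂_chainRun hU.1)
  refine ⟨c + 1, fun x y => ?_⟩
  obtain ⟨q, hq_len, hq⟩ := hU.exists_run_length_eq_C (bin (CL U y)) (bin y.length)
  obtain ⟨p₁, hp₁_len, hp₁⟩ := hU.exists_run_length_eq_C y (bin y.length)
  obtain ⟨p₂, hp₂_len, hp₂⟩ := hU.exists_run_length_eq_C x (pair2 y (bin x.length))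
  calc C U (x ++ y) (pair2 (bin x.length) (bin y.length))
      ≤ (selfDelim q ++ (p₁ ++ p₂)).length + c :=
        hc _ _ _ (append_mem_chainRun hq hp₁ hp₁_len hp₂)
    _ = _ := by
      simp only [List.length_append, length_selfDelim, hq_len, hp₁_len, hp₂_len, C2]
      ring

end SymInfo
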